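/- arXiv:1612.01554 — 4 statements merged into one kernel-verified Lean document; each statement's English description precedes it below -/
import Mathlib

section
/- Let h : ℝⁿ → ℝ be continuously differentiable, C = {x : h(x) ≥ 0}, and f : ℝⁿ → ℝⁿ locally Lipschitz. If there exists a locally Lipschitz, strictly increasing continuous function α : ℝ → ℝ with α(0) = 0 such that ⟨∇h(x), f(x)⟩ ≥ -α(h(x)) for all x in an open set D containing C, then every solution x(t) of ẋ = f(x) with x(0) ∈ C satisfies x(t) ∈ C for all t ≥ 0 in its maximal interval of existence. -/
/-!
Along the trajectory, `y = h ∘ x` satisfies `y' ≥ -α(y)` whenever `x` is in `D`. The set of times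
in `[0, T]` with `y ≥ 0` is closed, and it is open to the right: from a point of `C` the trajectory
spends a short time in the open set `D`, where the differential inequality keeps `y` nonnegative.
A closed subset of `[0, T]` containing `0` and open to the right is all of `[0, T]`.
-/

open Set Filter Topology RealInnerProductSpace

/-- Comparison with the constant barrier `-ε`: where `y = -ε` the derivative is at least
`-α(-ε) > 0`, so `y` never reaches `-ε`. -/
theorem nonneg_of_neg_le_deriv {α y y' : ℝ → ℝ} {a b : ℝ} (hα : ∀ s < 0, α s < 0)
    (hy : ContinuousOn y (Icc a b)) (hy' : ∀ t ∈ Ico a b, HasDerivWithinAt y (y' t) (Ici t) t)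
    (hbound : ∀ t ∈ Ico a b, -α (y t) ≤ y' t) (ha : 0 ≤ y a) :
    ∀ t ∈ Icc a b, 0 ≤ y t := by
  intro t ht
  suffices ∀ ε > 0, -y t ≤ ε from neg_nonpos.1 (le_of_forall_pos_le_add (by simpa using this))
  intro ε hε
  refine image_le_of_deriv_right_lt_deriv_boundary (f' := fun s => -y' s) (B' := fun _ => 0)
    hy.neg (fun s hs => (hy' s hs).neg) (by simp only [Pi.neg_apply]; linarith)
    (fun _ => hasDerivAt_const _ ε) ?_ ht
  intro s hs hys
  have hneg : y s < 0 := by simp only [Pi.neg_apply] at hys; linarith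
  linarith [hbound s hs, hα _ hneg]

theorem hasDerivAt_comp_inner_gradient {E : Type*} [NormedAddCommGroup E]
    [InnerProductSpace ℝ E] [CompleteSpace E] {h : E → ℝ} {x : ℝ → E} {v : E} {t : ℝ}
    (hh : DifferentiableAt ℝ h (x t)) (hx : HasDerivAt x v t) :
    HasDerivAt (h ∘ x) ⟪gradient h (x t), v⟫ t := by
  rw [inner_gradient_left]
  exact hh.hasFDerivAt.comp_hasDerivAt t hx

theorem zbf_forward_invariance_general (n : ℕ)
    (h : EuclideanSpace ℝ (Fin n) → ℝ) (hh : ContDiff ℝ 1 h)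
    (f : EuclideanSpace ℝ (Fin n) → EuclideanSpace ℝ (Fin n))
    (C : Set (EuclideanSpace ℝ (Fin n))) (hC : C = {x | h x ≥ 0})
    (D : Set (EuclideanSpace ℝ (Fin n))) (hD : IsOpen D) (hCD : C ⊆ D)
    (α : ℝ → ℝ) (hmono : StrictMono α) (hα0 : α 0 = 0)
    (hzbf : ∀ x ∈ D, ⟪gradient h x, f x⟫ ≥ -α (h x))
    (T : ℝ) (x : ℝ → EuclideanSpace ℝ (Fin n))
    (hsol : ∀ t ∈ Icc (0 : ℝ) T, HasDerivAt x (f (x t)) t)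
    (hx0 : x 0 ∈ C) :
    ∀ t ∈ Icc (0 : ℝ) T, x t ∈ C := by
  subst hC
  have hα : ∀ s < 0, α s < 0 := fun s hs => hα0 ▸ hmono hs
  have hderiv (t : ℝ) (ht : t ∈ Icc 0 T) :
      HasDerivAt (h ∘ x) ⟪gradient h (x t), f (x t)⟫ t :=
    hasDerivAt_comp_inner_gradient (hh.differentiable one_ne_zero _) (hsol t ht)
  have hcont : ContinuousOn (h ∘ x) (Icc 0 T) := fun t ht =>
    (hderiv t ht).continuousAt.continuousWithinAt
  have hlocal : ∀ t ∈ {t | 0 ≤ h (x t)} ∩ Ico 0 T, {t | 0 ≤ h (x t)} ∈ 𝓝[>] t := by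
    rintro t ⟨ht, ht0, htT⟩
    have hxD : x ⁻¹' D ∩ Ico t T ∈ 𝓝[≥] t :=
      inter_mem (nhdsWithin_le_nhds <| (hsol t ⟨ht0, htT.le⟩).continuousAt.preimage_mem_nhds
        (hD.mem_nhds (hCD ht))) (Ico_mem_nhdsGE htT)
    obtain ⟨u, htu, hsub⟩ := mem_nhdsGE_iff_exists_Icc_subset.1 hxD
    have hIcc : Icc t u ⊆ Icc 0 T := fun s hs => ⟨ht0.trans hs.1, (hsub hs).2.2.le⟩
    refine mem_of_superset (Icc_mem_nhdsGT htu) (nonneg_of_neg_le_deriv hα (hcont.mono hIcc)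
      (fun s hs => (hderiv s (hIcc (Ico_subset_Icc_self hs))).hasDerivWithinAt)
      (fun s hs => hzbf _ (hsub (Ico_subset_Icc_self hs)).1) ht)
  have hclosed : IsClosed ({t | 0 ≤ h (x t)} ∩ Icc 0 T) := by
    rw [inter_comm]; exact hcont.preimage_isClosed_of_isClosed isClosed_Icc isClosed_Ici
  exact fun t ht => IsClosed.Icc_subset_of_forall_mem_nhdsWithin hclosed hx0 hlocal ht

theorem zbf_forward_invariance (n : ℕ)
    (h : EuclideanSpace ℝ (Fin n) → ℝ) (hh : ContDiff ℝ 1 h)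
    (f : EuclideanSpace ℝ (Fin n) → EuclideanSpace ℝ (Fin n))
    (hf : LocallyLipschitz f)
    (C : Set (EuclideanSpace ℝ (Fin n))) (hC : C = {x | h x ≥ 0})
    (D : Set (EuclideanSpace ℝ (Fin n))) (hD : IsOpen D) (hCD : C ⊆ D)
    (α : ℝ → ℝ) (hα : LocallyLipschitz α) (hmono : StrictMono α)
    (hcont : Continuous α) (hα0 : α 0 = 0)
    (hzbf : ∀ x ∈ D, ⟪gradient h x, f x⟫ ≥ -α (h x))
    (T : ℝ) (hT : 0 ≤ T) (x : ℝ → EuclideanSpace ℝ (Fin n))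
    (hsol : ∀ t ∈ Icc (0 : ℝ) T, HasDerivAt x (f (x t)) t)
    (hx0 : x 0 ∈ C) :
    ∀ t ∈ Icc (0 : ℝ) T, x t ∈ C :=
  zbf_forward_invariance_general n h hh f C hC D hD hCD α hmono hα0 hzbf T x hsol hx0
end

section
/- Let h : ℝ → ℝ be continuously differentiable and suppose h'(x)·f(x) ≥ -α(h(x)) for all x, where α is locally Lipschitz, strictly increasing, and α(0) = 0, and f is locally Lipschitz. If x : [0,T] → ℝ solves ẋ = f(x) with h(x(0)) ≥ 0, then h(x(t)) ≥ 0 for all t ∈ [0,T]. -/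
open Set

/- `-g` stays below every barrier `ε (1 + (t - a))`: where they meet `g < 0`, so the barrier
grows strictly faster than `-g`. -/
theorem nonneg_of_deriv_nonneg_of_neg {g g' : ℝ → ℝ} {a b : ℝ}
    (hg : ContinuousOn g (Icc a b))
    (hg' : ∀ t ∈ Ico a b, HasDerivWithinAt g (g' t) (Ici t) t)
    (ha : 0 ≤ g a) (hneg : ∀ t ∈ Ico a b, g t < 0 → 0 ≤ g' t) :
    ∀ t ∈ Icc a b, 0 ≤ g t := by
  intro t ht
  have barrier : ∀ ε > 0, -g t ≤ ε * (1 + (t - a)) := by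
    intro ε hε
    refine image_le_of_deriv_right_lt_deriv_boundary (B := fun s => ε * (1 + (s - a)))
      (B' := fun _ => ε) hg.neg (fun s hs => (hg' s hs).neg)
      (show -g a ≤ ε * (1 + (a - a)) by rw [sub_self, add_zero, mul_one]; linarith)
      (fun s => by simpa using ((hasDerivAt_id s).sub_const a).const_add 1 |>.const_mul ε)
      (fun s hs hmeet => ?_) ht
    change -g s = ε * (1 + (s - a)) at hmeet
    have hgs : g s < 0 := by nlinarith [hs.1]
    show -g' s < ε
    linarith [hneg s hs hgs]
  have hpos : 0 < 1 + (t - a) := by linarith [ht.1]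
  refine neg_nonpos.mp (le_of_forall_pos_le_add fun ε hε => ?_)
  have := barrier (ε / (1 + (t - a))) (div_pos hε hpos)
  rw [div_mul_cancel₀ _ hpos.ne'] at this
  linarith

theorem nonneg_of_deriv_ge_neg_of_monotone {g g' α : ℝ → ℝ} {a b : ℝ}
    (hα : Monotone α) (hα0 : α 0 = 0)
    (hg : ∀ t ∈ Icc a b, HasDerivAt g (g' t) t)
    (hbound : ∀ t ∈ Ico a b, -α (g t) ≤ g' t) (ha : 0 ≤ g a) :
    ∀ t ∈ Icc a b, 0 ≤ g t := by
  refine nonneg_of_deriv_nonneg_of_neg (fun t ht => (hg t ht).continuousAt.continuousWithinAt)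
    (fun t ht => (hg t (Ico_subset_Icc_self ht)).hasDerivWithinAt) ha fun t ht hneg => ?_
  have : α (g t) ≤ 0 := hα0 ▸ hα hneg.le
  linarith [hbound t ht]

theorem zbf_forward_invariance_scalar_general
    (h : ℝ → ℝ) (hh : ContDiff ℝ 1 h)
    (f : ℝ → ℝ)
    (α : ℝ → ℝ) (hmono : StrictMono α) (hα0 : α 0 = 0)
    (hzbf : ∀ x : ℝ, deriv h x * f x ≥ -α (h x))
    (T : ℝ) (x : ℝ → ℝ)
    (hsol : ∀ t ∈ Icc (0 : ℝ) T, HasDerivAt x (f (x t)) t)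
    (hx0 : h (x 0) ≥ 0) :
    ∀ t ∈ Icc (0 : ℝ) T, h (x t) ≥ 0 := by
  have hderiv : ∀ t ∈ Icc (0 : ℝ) T,
      HasDerivAt (h ∘ x) (deriv h (x t) * f (x t)) t := fun t ht =>
    ((hh.differentiable one_ne_zero) (x t)).hasDerivAt.comp t (hsol t ht)
  exact nonneg_of_deriv_ge_neg_of_monotone hmono.monotone hα0 hderiv
    (fun t _ => hzbf (x t)) hx0

theorem zbf_forward_invariance_scalar
    (h : ℝ → ℝ) (hh : ContDiff ℝ 1 h)
    (f : ℝ → ℝ) (hf : LocallyLipschitz f)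
    (α : ℝ → ℝ) (hα : LocallyLipschitz α) (hmono : StrictMono α) (hα0 : α 0 = 0)
    (hzbf : ∀ x : ℝ, deriv h x * f x ≥ -α (h x))
    (T : ℝ) (x : ℝ → ℝ)
    (hsol : ∀ t ∈ Icc (0 : ℝ) T, HasDerivAt x (f (x t)) t)
    (hx0 : h (x 0) ≥ 0) :
    ∀ t ∈ Icc (0 : ℝ) T, h (x t) ≥ 0 :=
  zbf_forward_invariance_scalar_general h hh f α hmono hα0 hzbf T x hsol hx0
end

section
/- Let a : ℝⁿ → ℝ and b : ℝⁿ → ℝᵐ be locally Lipschitz with b(x) ≠ 0 for all x in an open set D ⊆ ℝⁿ. Then the function u*(x) = min(a(x), 0) · (-bᵀ(x) / ‖b(x)‖²) is locally Lipschitz on D. -/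
open Set

/-!
Write `u* = G ∘ (-min a 0, b)` with `G (s, v) = (s / ‖v‖²) • v`. The map `G` is `C¹`, hence
locally Lipschitz, on the open set `{v ≠ 0}`, into which `(-min a 0, b)` sends `D`; and locally
Lipschitz maps are stable under pairing and composition.
-/

open Filter Topology

namespace LocallyLipschitzOn

variable {α β γ : Type*} [PseudoEMetricSpace α] [PseudoEMetricSpace β] [PseudoEMetricSpace γ]
  {s : Set α} {t : Set β}

protected lemma prodMk {f : α → β} {g : α → γ} (hf : LocallyLipschitzOn s f)
    (hg : LocallyLipschitzOn s g) : LocallyLipschitzOn s fun x => (f x, g x) := fun x hx => by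
  obtain ⟨Kf, u, hu, hfu⟩ := hf hx
  obtain ⟨Kg, v, hv, hgv⟩ := hg hx
  exact ⟨max Kf Kg, u ∩ v, inter_mem hu hv,
    (hfu.mono inter_subset_left).prodMk (hgv.mono inter_subset_right)⟩

protected lemma comp {g : β → γ} {f : α → β} (hg : LocallyLipschitzOn t g)
    (hf : LocallyLipschitzOn s f) (hst : MapsTo f s t) : LocallyLipschitzOn s (g ∘ f) :=
  fun x hx => by
  obtain ⟨Kf, u, hu, hfu⟩ := hf hx
  obtain ⟨Kg, v, hv, hgv⟩ := hg (hst hx)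
  have hpre : f ⁻¹' v ∈ 𝓝[s] x :=
    ((hf.continuousOn x hx).tendsto_nhdsWithin hst) hv
  exact ⟨Kg * Kf, u ∩ f ⁻¹' v, inter_mem hu hpre,
    hgv.comp (hfu.mono inter_subset_left) fun _ hy => hy.2⟩

end LocallyLipschitzOn

lemma ContDiffOn.locallyLipschitzOn_of_isOpen {𝕜 E F : Type*} [RCLike 𝕜]
    [NormedAddCommGroup E] [NormedSpace 𝕜 E] [NormedAddCommGroup F] [NormedSpace 𝕜 F]
    {f : E → F} {s : Set E} (hs : IsOpen s) (hf : ContDiffOn 𝕜 1 f s) :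
    LocallyLipschitzOn s f := fun x hx => by
  obtain ⟨K, t, ht, hft⟩ := (hf.contDiffAt (hs.mem_nhds hx)).exists_lipschitzOnWith
  exact ⟨K, t, nhdsWithin_le_nhds ht, hft⟩

lemma locallyLipschitzOn_smul_div_norm_sq {F : Type*} [NormedAddCommGroup F]
    [InnerProductSpace ℝ F] :
    LocallyLipschitzOn {p : ℝ × F | p.2 ≠ 0} fun p => (p.1 / ‖p.2‖ ^ 2) • p.2 := by
  have hopen : IsOpen {p : ℝ × F | p.2 ≠ 0} := isOpen_ne.preimage continuous_snd
  refine ContDiffOn.locallyLipschitzOn_of_isOpen (𝕜 := ℝ) hopen fun p hp => ?_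
  have hnorm_sq : ContDiffAt ℝ 1 (fun p : ℝ × F => ‖p.2‖ ^ 2) p :=
    (contDiff_norm_sq ℝ).contDiffAt.comp _ contDiffAt_snd
  have hne : ‖p.2‖ ^ 2 ≠ 0 := pow_ne_zero 2 (norm_ne_zero_iff.2 hp)
  exact ((contDiffAt_fst.div hnorm_sq hne).smul contDiffAt_snd).contDiffWithinAt

theorem qp_solution_locally_lipschitz_general (n m : ℕ)
    (D : Set (EuclideanSpace ℝ (Fin n)))
    (a : EuclideanSpace ℝ (Fin n) → ℝ)
    (b : EuclideanSpace ℝ (Fin n) → EuclideanSpace ℝ (Fin m))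
    (ha : LocallyLipschitzOn D a) (hb : LocallyLipschitzOn D b)
    (hb0 : ∀ x ∈ D, b x ≠ 0) :
    LocallyLipschitzOn D (fun x => (-(min (a x) 0) / ‖b x‖ ^ 2) • b x) := by
  have hclip : LocallyLipschitz fun s : ℝ => -min s 0 :=
    (LipschitzWith.id.min (LipschitzWith.const 0)).neg.locallyLipschitz
  have hnum : LocallyLipschitzOn D fun x => -min (a x) 0 :=
    hclip.locallyLipschitzOn.comp ha (mapsTo_univ _ _)
  exact locallyLipschitzOn_smul_div_norm_sq.comp (hnum.prodMk hb) hb0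

theorem qp_solution_locally_lipschitz (n m : ℕ)
    (D : Set (EuclideanSpace ℝ (Fin n))) (hD : IsOpen D)
    (a : EuclideanSpace ℝ (Fin n) → ℝ)
    (b : EuclideanSpace ℝ (Fin n) → EuclideanSpace ℝ (Fin m))
    (ha : LocallyLipschitzOn D a) (hb : LocallyLipschitzOn D b)
    (hb0 : ∀ x ∈ D, b x ≠ 0) :
    LocallyLipschitzOn D (fun x => (-(min (a x) 0) / ‖b x‖ ^ 2) • b x) :=
  qp_solution_locally_lipschitz_general n m D a b ha hb hb0
end

section
/- Let G be a symmetric positive definite 2×2 real matrix and p ∈ ℝ². Define ω(r) = min(r,0). Suppose G₂₁·ω(p₂) - G₂₂·p₁ < 0. Then λ = (0, ω(p₂)/G₂₂) satisfies: Gλ ≤ p componentwise, λ ≤ 0 componentwise, and (Gλ)_i < p_i implies λ_i = 0 for i = 1, 2. -/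
/-!
Indices 1, 2 below are `0, 1 : Fin 2`. Only the second constraint is active: with
`λ = (0, ω(p₂)/G₂₂)` the second row of `Gλ` is exactly `ω(p₂) ≤ p₂`, and `ω(p₂) < p₂` forces `p₂ > 0`, i.e. `ω(p₂) = 0 = λ₂`. The first row is
`G₁₂ ω(p₂)/G₂₂`, and by symmetry of `G` the sign condition says precisely that this is `< p₁`.
-/

open Matrix

variable {K : Type*} [Field K] [LinearOrder K] [IsStrictOrderedRing K]

def IsComplementaritySolution {n : Type*} [Fintype n] (G : Matrix n n K) (p l : n → K) : Prop :=
  (∀ i, (G *ᵥ l) i ≤ p i) ∧ (∀ i, l i ≤ 0) ∧ (∀ i, (G *ᵥ l) i < p i → l i = 0)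

lemma mulVec_single_apply {R m n : Type*} [CommSemiring R] [Fintype n] [DecidableEq n]
    (M : Matrix m n R) (i : m) (j : n) (t : R) : (M *ᵥ Pi.single j t) i = M i j * t := by
  simp [mulVec_single, mul_comm]

lemma isComplementaritySolution_single {n : Type*} [Fintype n] [DecidableEq n]
    {G : Matrix n n K} {p : n → K} {j : n} (hjj : 0 < G j j)
    (hoff : ∀ i, i ≠ j → G i j * (min (p j) 0 / G j j) ≤ p i) :
    IsComplementaritySolution G p (Pi.single j (min (p j) 0 / G j j)) := by
  have hdiag : (G *ᵥ Pi.single j (min (p j) 0 / G j j)) j = min (p j) 0 := by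
    rw [mulVec_single_apply, mul_div_cancel₀ _ hjj.ne']
  refine ⟨fun i => ?_, fun i => ?_, fun i => ?_⟩
  · rcases eq_or_ne i j with rfl | hij
    · exact hdiag.symm ▸ min_le_left _ _
    · rw [mulVec_single_apply]
      exact hoff i hij
  · rcases eq_or_ne i j with rfl | hij
    · simpa using div_nonpos_of_nonpos_of_nonneg (min_le_right _ _) hjj.le
    · simp [hij]
  · rcases eq_or_ne i j with rfl | hij
    · rw [hdiag]
      intro hlt
      have hpos : 0 < p i := by simpa using hlt
      simp [hpos.le]
    · simp [hij]

theorem first_branch_multipliers_general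
    (G : Matrix (Fin 2) (Fin 2) ℝ) (hG : G.PosDef)
    (p : Fin 2 → ℝ)
    (hcond : G 1 0 * min (p 1) 0 - G 1 1 * p 0 < 0)
    (l : Fin 2 → ℝ) (hl : l = ![0, min (p 1) 0 / G 1 1]) :
    (∀ i : Fin 2, G.mulVec l i ≤ p i) ∧
    (∀ i : Fin 2, l i ≤ 0) ∧
    (∀ i : Fin 2, G.mulVec l i < p i → l i = 0) := by
  have h11 : 0 < G 1 1 := hG.diag_pos
  have hG₀₁ : G 0 1 = G 1 0 := by simpa using hG.isHermitian.apply 1 0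
  have hl_single : l = Pi.single 1 (min (p 1) 0 / G 1 1) := by
    subst hl
    ext i
    fin_cases i <;> simp
  subst hl_single
  refine isComplementaritySolution_single h11 fun i hi => ?_
  obtain rfl : i = 0 := by fin_cases i <;> simp_all
  rw [hG₀₁, mul_div_assoc', div_le_iff₀ h11]
  linarith

theorem first_branch_multipliers
    (G : Matrix (Fin 2) (Fin 2) ℝ) (hG : G.PosDef) (hsymm : G.IsSymm)
    (p : Fin 2 → ℝ)
    (hcond : G 1 0 * min (p 1) 0 - G 1 1 * p 0 < 0)
    (l : Fin 2 → ℝ) (hl : l = ![0, min (p 1) 0 / G 1 1]) :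
    (∀ i : Fin 2, G.mulVec l i ≤ p i) ∧
    (∀ i : Fin 2, l i ≤ 0) ∧
    (∀ i : Fin 2, G.mulVec l i < p i → l i = 0) :=
  first_branch_multipliers_general G hG p hcond l hl
end
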